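/- arXiv:2408.10033 — 4 statements merged into one kernel-verified Lean document; each statement's English description precedes it below -/
import Mathlib

section
/- Let f : ℤ → K be a function and m ≤ n integers such that the support of f is contained in the interval [m,n]. If Q f = 0, then the support of f is contained in [m+1, n-1]. (In particular (Qf)(m-1) = f(m) and (Qf)(n+1) = f(n) for any f supported in [m,n].) -/
/-- The discrete Laplace operator in dimension 1. -/
def discreteLaplace {K : Type*} [Field K] (f : ℤ → K) : ℤ → K :=
  fun x => f (x - 1) - 2 * f x + f (x + 1)

/-- If `f : ℤ → K` is supported in `[m, n]` then `(Qf)(m-1) = f(m)` and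
`(Qf)(n+1) = f(n)`; and if moreover `Q f = 0`, then `f` is supported in
`[m+1, n-1]`. -/
theorem support_shrink_of_discreteLaplace_eq_zero
    {K : Type*} [Field K] [CharZero K]
    (f : ℤ → K) (m n : ℤ) (hmn : m ≤ n)
    (hsupp : Function.support f ⊆ Set.Icc m n) :
    discreteLaplace f (m - 1) = f m ∧
    discreteLaplace f (n + 1) = f n ∧
    (discreteLaplace f = 0 →
      Function.support f ⊆ Set.Icc (m + 1) (n - 1)) := by
  have hz : ∀ x : ℤ, x < m ∨ n < x → f x = 0 := by
    intro x hx
    by_contra h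
    rcases hsupp h with ⟨h1, h2⟩
    rcases hx with hx | hx <;> omega
  have h1 : discreteLaplace f (m - 1) = f m := by
    simp only [discreteLaplace]
    rw [hz (m - 1 - 1) (by omega), hz (m - 1) (by omega)]
    ring_nf
  have h2 : discreteLaplace f (n + 1) = f n := by
    simp only [discreteLaplace]
    rw [hz (n + 1 + 1) (by omega), hz (n + 1) (by omega)]
    ring_nf
  refine ⟨h1, h2, fun hQ x hx => ?_⟩
  rcases hsupp hx with ⟨ha, hb⟩
  have hm : f m = 0 := by rw [← h1, hQ]; rfl
  have hn : f n = 0 := by rw [← h2, hQ]; rfl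
  constructor
  · rcases eq_or_lt_of_le ha with h | h
    · exact absurd (h ▸ hm) hx
    · omega
  · rcases eq_or_lt_of_le hb with h | h
    · exact absurd (h ▸ hn) hx
    · omega
end

section
/- Let a, b be real numbers with b - a > 2. Consider the linear map Φ sending a finitely supported function f : ℤ → K with support contained in {x ∈ ℤ : a < x < b} to the pair (∑_{x∈ℤ} f(x), ∑_{x∈ℤ} x·f(x)) ∈ K². Then (i) Φ is surjective, and (ii) Φ(f) = (0,0) if and only if there exists a finitely supported g : ℤ → K with support contained in {x ∈ ℤ : a+1 < x < b-1} such that Q g = f. (In other words, Φ induces an isomorphism between the cokernel of Q : Map(ℤ∩(a+1,b-1),K) → Map(ℤ∩(a,b),K) and the two-dimensional space K·q ⊕ K·p.) -/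
open Function Finset

lemma Int.setOf_lt_and_lt_eq_Icc (a b : ℝ) :
    {x : ℤ | a < (x : ℝ) ∧ (x : ℝ) < b} = Set.Icc (⌊a⌋ + 1) (⌈b⌉ - 1) := by
  ext x
  simp only [Set.mem_ofPred_eq, Set.mem_Icc, ← Int.floor_lt, ← Int.lt_ceil]
  omega

lemma finsum_comp_add_one_sub_eq_zero {M : Type*} [AddCommGroup M] {h : ℤ → M}
    (hh : HasFiniteSupport h) : ∑ᶠ x, (h (x + 1) - h x) = 0 := by
  rw [finsum_sub_distrib (f := fun x => h (x + 1))
    (hh.comp_of_injective (add_left_injective 1)) hh, sub_eq_zero]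
  exact finsum_comp_equiv (Equiv.addRight 1)

section

variable {K : Type*} [Field K]

lemma exists_finsum_eq_and_finsum_mul_eq (n : ℤ) (c d : K) :
    ∃ f : ℤ → K, support f ⊆ {n, n + 1} ∧
      ∑ᶠ x, f x = c ∧ ∑ᶠ x : ℤ, (x : K) * f x = d := by
  classical
  set f : ℤ → K := Pi.single n ((n + 1) * c - d) + Pi.single (n + 1) (d - n * c)
  have hf : support f ⊆ ({n, n + 1} : Finset ℤ) := by
    intro x hx
    by_contra hx'
    simp_all [f, Pi.single_apply]
  have hfn : f n = (n + 1) * c - d := by simp [f]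
  have hfn₁ : f (n + 1) = d - n * c := by simp [f]
  refine ⟨f, by simpa using hf, ?_, ?_⟩
  · rw [finsum_eq_sum_of_support_subset _ hf, sum_pair (by omega), hfn, hfn₁]
    ring
  · rw [finsum_eq_sum_of_support_subset _ ((support_mul_subset_right _ _).trans hf),
      sum_pair (by omega), hfn, hfn₁]
    push_cast
    ring

theorem finsum_discreteLaplace {g : ℤ → K} (hg : HasFiniteSupport g) :
    ∑ᶠ x, discreteLaplace g x = 0 := by
  calc ∑ᶠ x, discreteLaplace g x
      = ∑ᶠ x, ((g (x + 1) - g (x + 1 - 1)) - (g x - g (x - 1))) := by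
        congr! 2 with x; simp only [discreteLaplace, add_sub_cancel_right]; ring
    _ = 0 := finsum_comp_add_one_sub_eq_zero (h := fun x => g x - g (x - 1))
        (by fun_prop (disch := exact sub_left_injective))

theorem finsum_mul_discreteLaplace {g : ℤ → K} (hg : HasFiniteSupport g) :
    ∑ᶠ x : ℤ, (x : K) * discreteLaplace g x = 0 := by
  calc ∑ᶠ x : ℤ, (x : K) * discreteLaplace g x
      = ∑ᶠ x : ℤ, (((x + 1 : ℤ) : K) * (g (x + 1) - g (x + 1 - 1)) - g (x + 1) -
          ((x : K) * (g x - g (x - 1)) - g x)) := by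
        congr! 2 with x; simp only [discreteLaplace, add_sub_cancel_right]; push_cast; ring
    _ = 0 := finsum_comp_add_one_sub_eq_zero (h := fun x : ℤ => (x : K) * (g x - g (x - 1)) - g x)
        (by fun_prop (disch := exact sub_left_injective))

lemma discreteLaplace_ramp (y : ℤ) :
    discreteLaplace (fun t => ((max (t - y) 0 : ℤ) : K)) = fun t => if y = t then 1 else 0 := by
  funext t
  have hℤ : max (t - 1 - y) 0 - 2 * max (t - y) 0 + max (t + 1 - y) 0 =
      if y = t then 1 else 0 := by
    split_ifs <;> omega
  simp only [discreteLaplace]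
  exact_mod_cast congrArg (Int.cast : ℤ → K) hℤ

lemma discreteLaplace_sum_mul (s : Finset ℤ) (c : ℤ → K) (φ : ℤ → ℤ → K) :
    discreteLaplace (fun t => ∑ y ∈ s, φ y t * c y) =
      fun t => ∑ y ∈ s, discreteLaplace (φ y) t * c y := by
  funext t
  simp only [discreteLaplace, mul_sum, ← sum_sub_distrib, ← sum_add_distrib]
  congr! 1 with y; ring

def laplacePotential (s : Finset ℤ) (f : ℤ → K) : ℤ → K :=
  fun t => ∑ y ∈ s, ((max (t - y) 0 : ℤ) : K) * f y

theorem discreteLaplace_laplacePotential {s : Finset ℤ} {f : ℤ → K} (hf : support f ⊆ s) :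
    discreteLaplace (laplacePotential s f) = f := by
  funext t
  unfold laplacePotential
  rw [discreteLaplace_sum_mul]
  simp only [discreteLaplace_ramp, ite_mul, one_mul, zero_mul, sum_ite_eq']
  split_ifs with ht
  · rfl
  · exact (notMem_support.mp fun h => ht (hf h)).symm

lemma laplacePotential_eq_zero_of_forall_le {s : Finset ℤ} {t : ℤ} (f : ℤ → K)
    (h : ∀ y ∈ s, t ≤ y) : laplacePotential s f t = 0 :=
  sum_eq_zero fun y hy => by rw [max_eq_right (by linarith [h y hy])]; simp

lemma laplacePotential_eq_of_forall_ge {s : Finset ℤ} {t : ℤ} (f : ℤ → K)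
    (h : ∀ y ∈ s, y ≤ t) :
    laplacePotential s f t = t * ∑ y ∈ s, f y - ∑ y ∈ s, (y : K) * f y := by
  rw [laplacePotential, mul_sum, ← sum_sub_distrib]
  refine sum_congr rfl fun y hy => ?_
  rw [max_eq_left (by linarith [h y hy])]
  push_cast; ring

lemma support_laplacePotential_subset {m M : ℤ} {f : ℤ → K}
    (h₀ : ∑ y ∈ Icc m M, f y = 0) (h₁ : ∑ y ∈ Icc m M, (y : K) * f y = 0) :
    support (laplacePotential (Icc m M) f) ⊆ Set.Icc (m + 1) (M - 1) := by
  intro t ht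
  by_contra hout
  rw [Set.mem_Icc, not_and_or, not_le, not_le] at hout
  apply ht
  rcases hout with hlt | hgt
  · exact laplacePotential_eq_zero_of_forall_le f fun y hy => by linarith [(mem_Icc.mp hy).1]
  · rw [laplacePotential_eq_of_forall_ge f fun y hy => by linarith [(mem_Icc.mp hy).2], h₀, h₁]
    ring

theorem moments_eq_zero_iff_exists_discreteLaplace_eq {m M : ℤ} {f : ℤ → K}
    (hf : support f ⊆ Set.Icc m M) :
    ((∑ᶠ x, f x = 0 ∧ ∑ᶠ x : ℤ, (x : K) * f x = 0) ↔
      ∃ g : ℤ → K, support g ⊆ Set.Icc (m + 1) (M - 1) ∧ discreteLaplace g = f) := by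
  rw [← coe_Icc] at hf
  constructor
  · rintro ⟨h₀, h₁⟩
    rw [finsum_eq_sum_of_support_subset _ hf] at h₀
    rw [finsum_eq_sum_of_support_subset _ ((support_mul_subset_right _ _).trans hf)] at h₁
    exact ⟨_, support_laplacePotential_subset h₀ h₁, discreteLaplace_laplacePotential hf⟩
  · rintro ⟨g, hg, rfl⟩
    have hg_fin : HasFiniteSupport g := (Set.finite_Icc _ _).subset hg
    exact ⟨finsum_discreteLaplace hg_fin, finsum_mul_discreteLaplace hg_fin⟩

end

theorem discreteLaplace_cokernel_iso_general
    {K : Type*} [Field K]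
    (a b : ℝ) (hab : b - a > 2) :
    (∀ c d : K, ∃ f : ℤ → K,
      Function.support f ⊆ {x : ℤ | a < (x : ℝ) ∧ (x : ℝ) < b} ∧
      (∑ᶠ x : ℤ, f x) = c ∧ (∑ᶠ x : ℤ, (x : K) * f x) = d) ∧
    (∀ f : ℤ → K,
      Function.support f ⊆ {x : ℤ | a < (x : ℝ) ∧ (x : ℝ) < b} →
      (((∑ᶠ x : ℤ, f x) = 0 ∧ (∑ᶠ x : ℤ, (x : K) * f x) = 0) ↔
        ∃ g : ℤ → K,
          Function.support g ⊆ {x : ℤ | a + 1 < (x : ℝ) ∧ (x : ℝ) < b - 1} ∧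
          discreteLaplace g = f)) := by
  simp only [Int.setOf_lt_and_lt_eq_Icc, Int.floor_add_one, Int.ceil_sub_one]
  have hlen : ⌊a⌋ + 1 + 1 ≤ ⌈b⌉ - 1 := by
    have : (2 : ℝ) < ⌈b⌉ - ⌊a⌋ := by linarith [Int.floor_le a, Int.le_ceil b]
    have : 2 < ⌈b⌉ - ⌊a⌋ := by exact_mod_cast this
    omega
  refine ⟨fun c d => ?_, fun f hf => moments_eq_zero_iff_exists_discreteLaplace_eq hf⟩
  obtain ⟨f, hf, hc, hd⟩ := exists_finsum_eq_and_finsum_mul_eq (⌊a⌋ + 1) c d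
  refine ⟨f, hf.trans ?_, hc, hd⟩
  rw [Set.insert_subset_iff, Set.singleton_subset_iff, Set.mem_Icc, Set.mem_Icc]
  omega

/-- For `b - a > 2`, the map `f ↦ (∑ₓ f(x), ∑ₓ x·f(x))` on functions supported in
`ℤ ∩ (a, b)` is surjective, and its kernel is exactly the image of the discrete
Laplace operator applied to functions supported in `ℤ ∩ (a+1, b-1)`.  In other
words it identifies the cokernel of `Q : Map(ℤ∩(a+1,b-1),K) → Map(ℤ∩(a,b),K)`
with `K·q ⊕ K·p`. -/
theorem discreteLaplace_cokernel_iso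
    {K : Type*} [Field K] [CharZero K]
    (a b : ℝ) (hab : b - a > 2) :
    (∀ c d : K, ∃ f : ℤ → K,
      Function.support f ⊆ {x : ℤ | a < (x : ℝ) ∧ (x : ℝ) < b} ∧
      (∑ᶠ x : ℤ, f x) = c ∧ (∑ᶠ x : ℤ, (x : K) * f x) = d) ∧
    (∀ f : ℤ → K,
      Function.support f ⊆ {x : ℤ | a < (x : ℝ) ∧ (x : ℝ) < b} →
      (((∑ᶠ x : ℤ, f x) = 0 ∧ (∑ᶠ x : ℤ, (x : K) * f x) = 0) ↔
        ∃ g : ℤ → K,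
          Function.support g ⊆ {x : ℤ | a + 1 < (x : ℝ) ∧ (x : ℝ) < b - 1} ∧
          discreteLaplace g = f)) :=
  discreteLaplace_cokernel_iso_general a b hab
end

section
/- Let A, B : ℤ → K satisfy Q_α A = 0, A(0) = 1, A(1) = (α + α⁻¹)/2, and Q_α B = 0, B(0) = 0, B(1) = 1. Let a, b be real numbers with b - a > 2. Consider the linear map φ sending a finitely supported function f : ℤ → K with support contained in {x ∈ ℤ : a < x < b} to the pair (∑_{x∈ℤ} f(x)·A(x), ∑_{x∈ℤ} f(x)·B(x)) ∈ K². Then (i) φ is surjective, and (ii) φ(f) = (0,0) if and only if there exists a finitely supported g : ℤ → K with support contained in {x ∈ ℤ : a+1 < x < b-1} such that Q_α g = f. (In other words, φ induces an isomorphism between the cokernel of Q_α : Map(ℤ∩(a+1,b-1),K) → Map(ℤ∩(a,b),K) and K·q ⊕ K·p.) -/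
/-!
Two solutions `A`, `B` of `Q_α u = 0` have constant Wronskian, equal to `1` here, so they are a
fundamental system. Summation by parts shows that `∑ (Q_α g) C = ∑ g (Q_α C) = 0` for every
finitely supported `g` and every solution `C`, so the image of `Q_α` lies in the kernel of
`f ↦ (∑ f A, ∑ f B)`. Conversely, variation of constants solves `Q_α g = f` by
`g x = ∑_{y < x} f y (A y B x - B y A x)`; this `g` vanishes to the left of the support of `f`,
and, when both sums of `f` vanish, also to the right of it. Surjectivity uses two consecutive
points, where the pairing with `(A, B)` is the invertible Wronskian matrix.
-/

/-- The massive discrete Laplace-type operator `Q_α`. -/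
def discreteLaplaceAlpha {K : Type*} [Field K] (α : K) (f : ℤ → K) : ℤ → K :=
  fun x => f (x - 1) - (α + α⁻¹) * f x + f (x + 1)

open Finset Function

section Kernels

variable {R : Type*} [CommRing R] (A B : ℤ → R)

def discreteWronskian (x : ℤ) : R :=
  A x * B (x + 1) - A (x + 1) * B x

def cauchyKernel (y x : ℤ) : R :=
  A y * B x - B y * A x

theorem cauchyKernel_self (y : ℤ) : cauchyKernel A B y y = 0 := by
  unfold cauchyKernel; ring

theorem cauchyKernel_add_one (y : ℤ) : cauchyKernel A B y (y + 1) = discreteWronskian A B y := by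
  unfold cauchyKernel discreteWronskian; ring

theorem exists_support_subset_pair_finsum_mul_eq (p : ℤ) (hW : discreteWronskian A B p = 1)
    (c d : R) : ∃ f : ℤ → R, support f ⊆ {p, p + 1} ∧
      ∑ᶠ x, f x * A x = c ∧ ∑ᶠ x, f x * B x = d := by
  set f : ℤ → R :=
    Pi.single p (c * B (p + 1) - d * A (p + 1)) + Pi.single (p + 1) (d * A p - c * B p)
  have hf : support f ⊆ ↑({p, p + 1} : Finset ℤ) := by
    refine (support_add _ _).trans (Set.union_subset ?_ ?_) <;>
      exact Pi.support_single_subset.trans (by simp)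
  have hsum : ∀ C : ℤ → R, ∑ᶠ x, f x * C x = f p * C p + f (p + 1) * C (p + 1) := fun C => by
    rw [finsum_eq_sum_of_support_subset _ ((support_mul_subset_left _ _).trans hf),
      sum_pair (by omega)]
  unfold discreteWronskian at hW
  refine ⟨f, by simpa using hf, ?_, ?_⟩ <;> rw [hsum] <;>
    simp only [f, Pi.add_apply, Pi.single_eq_same, Pi.single_eq_of_ne (by omega : p + 1 ≠ p),
      Pi.single_eq_of_ne (by omega : p ≠ p + 1), zero_add, add_zero]
  · linear_combination c * hW
  · linear_combination d * hW

theorem finsum_mul_cauchyKernel {f : ℤ → R} (hf : (support f).Finite) (x : ℤ) :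
    ∑ᶠ y, f y * cauchyKernel A B y x = (∑ᶠ y, f y * A y) * B x - (∑ᶠ y, f y * B y) * A x := by
  have hsum : ∀ C : ℤ → R, ∑ᶠ y, f y * C y = ∑ y ∈ hf.toFinset, f y * C y := fun C =>
    finsum_eq_sum_of_support_subset _ ((support_mul_subset_left _ _).trans hf.coe_toFinset.ge)
  simp only [hsum, cauchyKernel, sum_mul, ← sum_sub_distrib]
  exact sum_congr rfl fun y _ => by ring

end Kernels

section DiscreteLaplaceAlpha

variable {K : Type*} [Field K] {α : K} {A B C : ℤ → K}

theorem discreteWronskian_eq_discreteWronskian_zero (hA : discreteLaplaceAlpha α A = 0)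
    (hB : discreteLaplaceAlpha α B = 0) (x : ℤ) :
    discreteWronskian A B x = discreteWronskian A B 0 := by
  have hperiodic : Periodic (discreteWronskian A B) 1 := fun x => by
    have hAx := congrFun hA (x + 1)
    have hBx := congrFun hB (x + 1)
    simp only [discreteLaplaceAlpha, add_sub_cancel_right, Pi.zero_apply] at hAx hBx
    unfold discreteWronskian
    linear_combination A (x + 1) * hBx - B (x + 1) * hAx
  simpa using hperiodic.zsmul_eq x

theorem finsum_discreteLaplaceAlpha_mul_eq_zero {g : ℤ → K} (hg : (support g).Finite)
    (hC : discreteLaplaceAlpha α C = 0) :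
    ∑ᶠ x, discreteLaplaceAlpha α g x * C x = 0 := by
  set D : ℤ → K := fun x => g x * C (x + 1) - g (x + 1) * C x
  -- `(Q_α g) C - g (Q_α C)` is the discrete derivative of the Wronskian-type term `D`.
  have htelescope : ∀ x, discreteLaplaceAlpha α g x * C x = D (x - 1) - D x := fun x => by
    have hCx := congrFun hC x
    simp only [discreteLaplaceAlpha, Pi.zero_apply] at hCx ⊢
    simp only [D, sub_add_cancel]
    linear_combination g x * hCx
  have hD : (support D).Finite := by
    refine ((hg.subset (support_mul_subset_left _ _)).union ?_).subset (support_sub _ _)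
    exact (hg.preimage (add_left_injective 1).injOn).subset (support_mul_subset_left _ _)
  rw [finsum_congr htelescope, finsum_sub_distrib (hD.preimage sub_left_injective.injOn) hD]
  exact sub_eq_zero.2 (finsum_comp_equiv (Equiv.subRight 1))

theorem discreteLaplaceAlpha_cauchyKernel (hA : discreteLaplaceAlpha α A = 0)
    (hB : discreteLaplaceAlpha α B = 0) (y : ℤ) :
    discreteLaplaceAlpha α (cauchyKernel A B y) = 0 := by
  funext x
  have hAx := congrFun hA x
  have hBx := congrFun hB x
  simp only [discreteLaplaceAlpha, cauchyKernel, Pi.zero_apply] at hAx hBx ⊢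
  linear_combination A y * hBx - B y * hAx

theorem discreteLaplaceAlpha_sum_Ico_mul_cauchyKernel (hA : discreteLaplaceAlpha α A = 0)
    (hB : discreteLaplaceAlpha α B = 0) (hW : ∀ y, discreteWronskian A B y = 1)
    {f : ℤ → K} {n : ℤ} (hf : ∀ x < n, f x = 0) :
    discreteLaplaceAlpha α (fun x => ∑ y ∈ Ico n x, f y * cauchyKernel A B y x) = f := by
  funext x
  have hsolution : ∑ y ∈ Ico n x, f y * cauchyKernel A B y (x - 1)
      - (α + α⁻¹) * ∑ y ∈ Ico n x, f y * cauchyKernel A B y x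
      + ∑ y ∈ Ico n x, f y * cauchyKernel A B y (x + 1) = 0 := by
    rw [mul_sum, ← sum_sub_distrib, ← sum_add_distrib]
    refine sum_eq_zero fun y _ => ?_
    have hKx := congrFun (discreteLaplaceAlpha_cauchyKernel hA hB y) x
    simp only [discreteLaplaceAlpha, Pi.zero_apply] at hKx
    linear_combination f y * hKx
  have hprev : ∑ y ∈ Ico n (x - 1), f y * cauchyKernel A B y (x - 1)
      = ∑ y ∈ Ico n x, f y * cauchyKernel A B y (x - 1) := by
    refine sum_subset (Ico_subset_Ico_right (by omega)) fun y hy hy' => ?_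
    obtain rfl : y = x - 1 := by simp only [mem_Ico] at hy hy'; omega
    rw [cauchyKernel_self, mul_zero]
  have hnext : ∑ y ∈ Ico n (x + 1), f y * cauchyKernel A B y (x + 1)
      = ∑ y ∈ Ico n x, f y * cauchyKernel A B y (x + 1) + f x := by
    rcases lt_or_ge x n with hxn | hnx
    · rw [hf x hxn, Ico_eq_empty_of_le (by omega), Ico_eq_empty_of_le hxn.le]
      simp
    · rw [Ico_add_one_right_eq_Icc, ← Ico_insert_right hnx, sum_insert (by simp),
        cauchyKernel_add_one, hW, add_comm, mul_one]
  simp only [discreteLaplaceAlpha]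
  rw [hprev, hnext]
  linear_combination hsolution

theorem exists_support_subset_Ioo_discreteLaplaceAlpha_eq (hA : discreteLaplaceAlpha α A = 0)
    (hB : discreteLaplaceAlpha α B = 0) (hW : ∀ y, discreteWronskian A B y = 1) {m n : ℤ}
    {f : ℤ → K} (hf : support f ⊆ Set.Ioo m n) (hfA : ∑ᶠ x, f x * A x = 0)
    (hfB : ∑ᶠ x, f x * B x = 0) :
    ∃ g : ℤ → K, support g ⊆ Set.Ioo (m + 1) (n - 1) ∧ discreteLaplaceAlpha α g = f := by
  have hf_left : ∀ x < m + 1, f x = 0 := fun x hx =>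
    notMem_support.1 fun hfx => by have := hf hfx; simp only [Set.mem_Ioo] at this; omega
  refine ⟨fun x => ∑ y ∈ Ico (m + 1) x, f y * cauchyKernel A B y x, fun x hx => ?_,
    discreteLaplaceAlpha_sum_Ico_mul_cauchyKernel hA hB hW hf_left⟩
  by_contra hout
  apply mem_support.1 hx
  rcases le_or_gt x (m + 1) with hxm | hxm
  · rw [Ico_eq_empty_of_le hxm, sum_empty]
  have hxn : n - 1 ≤ x := by simp only [Set.mem_Ioo, not_and, not_lt] at hout; omega
  -- beyond the support of `f` the truncated sum is the full one, which vanishes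
  have hsupp : support (fun y => f y * cauchyKernel A B y x) ⊆ ↑(Ico (m + 1) x) := fun y hy => by
    have hfy := hf (left_ne_zero_of_mul hy)
    have hyx : y ≠ x := by rintro rfl; simp [cauchyKernel_self] at hy
    simp only [Set.mem_Ioo, coe_Ico, Set.mem_Ico] at hfy ⊢
    omega
  rw [← finsum_eq_sum_of_support_subset _ hsupp,
    finsum_mul_cauchyKernel A B ((Set.finite_Ioo m n).subset hf), hfA, hfB]
  ring

end DiscreteLaplaceAlpha

theorem setOf_lt_intCast_lt_eq_Ioo {R : Type*} [Ring R] [LinearOrder R] [IsStrictOrderedRing R]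
    [FloorRing R] (a b : R) : {x : ℤ | a < (x : R) ∧ (x : R) < b} = Set.Ioo ⌊a⌋ ⌈b⌉ := by
  ext x
  simp [Int.floor_lt, Int.lt_ceil]

theorem discreteLaplaceAlpha_cokernel_iso_general
    {K : Type*} [Field K] (α : K)
    (A B : ℤ → K)
    (hA : discreteLaplaceAlpha α A = 0) (hA0 : A 0 = 1)
    (hB : discreteLaplaceAlpha α B = 0) (hB0 : B 0 = 0) (hB1 : B 1 = 1)
    (a b : ℝ) (hab : b - a > 2) :
    (∀ c d : K, ∃ f : ℤ → K,
      Function.support f ⊆ {x : ℤ | a < (x : ℝ) ∧ (x : ℝ) < b} ∧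
      (∑ᶠ x : ℤ, f x * A x) = c ∧ (∑ᶠ x : ℤ, f x * B x) = d) ∧
    (∀ f : ℤ → K,
      Function.support f ⊆ {x : ℤ | a < (x : ℝ) ∧ (x : ℝ) < b} →
      (((∑ᶠ x : ℤ, f x * A x) = 0 ∧ (∑ᶠ x : ℤ, f x * B x) = 0) ↔
        ∃ g : ℤ → K,
          Function.support g ⊆ {x : ℤ | a + 1 < (x : ℝ) ∧ (x : ℝ) < b - 1} ∧
          discreteLaplaceAlpha α g = f)) := by
  have hW : ∀ y, discreteWronskian A B y = 1 := fun y => by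
    rw [discreteWronskian_eq_discreteWronskian_zero hA hB, discreteWronskian]
    simp [hA0, hB0, hB1]
  have hgap : ⌊a⌋ + 2 < ⌈b⌉ := by
    have : (⌊a⌋ : ℝ) + 2 < ⌈b⌉ := by linarith [Int.floor_le a, Int.le_ceil b]
    exact_mod_cast this
  rw [setOf_lt_intCast_lt_eq_Ioo, setOf_lt_intCast_lt_eq_Ioo, Int.floor_add_one, Int.ceil_sub_one]
  refine ⟨fun c d => ?_, fun f hf => ⟨fun ⟨hfA, hfB⟩ => ?_, ?_⟩⟩
  · obtain ⟨f, hf, hfA, hfB⟩ := exists_support_subset_pair_finsum_mul_eq A B (⌊a⌋ + 1) (hW _) c d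
    refine ⟨f, hf.trans ?_, hfA, hfB⟩
    simp only [Set.insert_subset_iff, Set.singleton_subset_iff, Set.mem_Ioo]
    omega
  · exact exists_support_subset_Ioo_discreteLaplaceAlpha_eq hA hB hW hf hfA hfB
  · rintro ⟨g, hg, rfl⟩
    have hg_finite := (Set.finite_Ioo _ _).subset hg
    exact ⟨finsum_discreteLaplaceAlpha_mul_eq_zero hg_finite hA,
      finsum_discreteLaplaceAlpha_mul_eq_zero hg_finite hB⟩

/-- For `b - a > 2`, the map `f ↦ (∑ₓ f(x)·A(x), ∑ₓ f(x)·B(x))` on functions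
supported in `ℤ ∩ (a, b)` is surjective, and its kernel is exactly the image of
`Q_α` applied to functions supported in `ℤ ∩ (a+1, b-1)`.  In other words it
identifies the cokernel of `Q_α : Map(ℤ∩(a+1,b-1),K) → Map(ℤ∩(a,b),K)` with
`K·q ⊕ K·p`. -/
theorem discreteLaplaceAlpha_cokernel_iso
    {K : Type*} [Field K] [CharZero K] (α : K) (hα : α ≠ 0)
    (A B : ℤ → K)
    (hA : discreteLaplaceAlpha α A = 0) (hA0 : A 0 = 1)
    (hA1 : A 1 = (α + α⁻¹) / 2)
    (hB : discreteLaplaceAlpha α B = 0) (hB0 : B 0 = 0) (hB1 : B 1 = 1)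
    (a b : ℝ) (hab : b - a > 2) :
    (∀ c d : K, ∃ f : ℤ → K,
      Function.support f ⊆ {x : ℤ | a < (x : ℝ) ∧ (x : ℝ) < b} ∧
      (∑ᶠ x : ℤ, f x * A x) = c ∧ (∑ᶠ x : ℤ, f x * B x) = d) ∧
    (∀ f : ℤ → K,
      Function.support f ⊆ {x : ℤ | a < (x : ℝ) ∧ (x : ℝ) < b} →
      (((∑ᶠ x : ℤ, f x * A x) = 0 ∧ (∑ᶠ x : ℤ, f x * B x) = 0) ↔
        ∃ g : ℤ → K,
          Function.support g ⊆ {x : ℤ | a + 1 < (x : ℝ) ∧ (x : ℝ) < b - 1} ∧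
          discreteLaplaceAlpha α g = f)) :=
  discreteLaplaceAlpha_cokernel_iso_general α A B hA hA0 hB hB0 hB1 a b hab
end

section
/- Let W·p denote the left ideal of the Weyl algebra W generated by p. The K-linear map from the polynomial ring K[X] to the quotient left module W/(W·p) sending Xⁿ to the class of qⁿ (for each n ≥ 0) is a bijection. (This identifies the coinvariant module of the time-reversal anti-involution, i.e. the Fock module, with K[q].) -/
open FreeAlgebra in
/-- The defining relation of the Weyl algebra: `p·q = q·p + ℏ·1`, where
`q = ι 0` and `p = ι 1` are the generators of the free algebra. -/
inductive WeylRel (K : Type*) [Field K] (ℏ : K) :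
    FreeAlgebra K (Fin 2) → FreeAlgebra K (Fin 2) → Prop
  | rel : WeylRel K ℏ (ι K 1 * ι K 0)
      (ι K 0 * ι K 1 + algebraMap K (FreeAlgebra K (Fin 2)) ℏ)

/-- The Weyl algebra: the quotient of the free algebra `K⟨q,p⟩` by the
two-sided ideal generated by `pq - qp - ℏ`. -/
abbrev Weyl (K : Type*) [Field K] (ℏ : K) := RingQuot (WeylRel K ℏ)

/-- The generator `q` of the Weyl algebra. -/
noncomputable def Weyl.q (K : Type*) [Field K] (ℏ : K) : Weyl K ℏ :=
  RingQuot.mkAlgHom K (WeylRel K ℏ) (FreeAlgebra.ι K 0)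

/-- The generator `p` of the Weyl algebra. -/
noncomputable def Weyl.p (K : Type*) [Field K] (ℏ : K) : Weyl K ℏ :=
  RingQuot.mkAlgHom K (WeylRel K ℏ) (FreeAlgebra.ι K 1)

/-! The Fock representation of `W` on `K[X]` (`q` acting by `X`, `p` by `ℏ d/dX`) gives
injectivity: applying an element of `W` to `1` kills `W·p` and sends `f(q)` to `f`.
For surjectivity, `p f(q) = f(q) p + ℏ f'(q)` shows that the classes of polynomials in `q`
are stable under left multiplication by the generators `q` and `p`, hence by all of `W`;
since they contain the class of `1`, they exhaust the cyclic module `W/(W·p)`. -/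

theorem Submodule.smul_mem_of_adjoin_eq_top {R A M : Type*} [CommSemiring R] [Semiring A]
    [Algebra R A] [AddCommMonoid M] [Module R M] [Module A M] [IsScalarTower R A M]
    {s : Set A} (hs : Algebra.adjoin R s = ⊤) (N : Submodule R M)
    (hN : ∀ a ∈ s, ∀ m ∈ N, a • m ∈ N) (a : A) {m : M} (hm : m ∈ N) : a • m ∈ N := by
  have ha : a ∈ Algebra.adjoin R s := hs ▸ Algebra.mem_top
  induction ha using Algebra.adjoin_induction generalizing m with
  | mem a ha => exact hN a ha m hm
  | algebraMap r => simpa only [algebraMap_smul] using N.smul_mem r hm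
  | add a b _ _ iha ihb => simpa only [add_smul] using N.add_mem (iha hm) (ihb hm)
  | mul a b _ _ iha ihb => simpa only [mul_smul] using iha (ihb hm)

namespace Weyl

open Polynomial

variable (K : Type*) [Field K] (ℏ : K)

theorem p_mul_q : p K ℏ * q K ℏ = q K ℏ * p K ℏ + algebraMap K (Weyl K ℏ) ℏ := by
  unfold p q
  simpa only [map_mul, map_add, AlgHom.commutes] using
    RingQuot.mkAlgHom_rel K (WeylRel.rel (K := K) (ℏ := ℏ))

theorem adjoin_q_p : Algebra.adjoin K {q K ℏ, p K ℏ} = ⊤ := by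
  have hgen : RingQuot.mkAlgHom K (WeylRel K ℏ) '' Set.range (FreeAlgebra.ι K) =
      {q K ℏ, p K ℏ} := by
    ext w
    simp [Fin.exists_fin_two, q, p, eq_comm]
  rw [← hgen, Algebra.adjoin_image, FreeAlgebra.adjoin_range_ι, Algebra.map_top,
    AlgHom.range_eq_top]
  exact RingQuot.mkAlgHom_surjective K _

theorem p_mul_aeval_q (f : K[X]) : p K ℏ * aeval (q K ℏ) f =
    aeval (q K ℏ) f * p K ℏ + ℏ • aeval (q K ℏ) (derivative f) := by
  induction f using Polynomial.induction_on with
  | C c => simp [Algebra.commutes]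
  | add f g hf hg => simp only [map_add, mul_add, add_mul, hf, hg, smul_add]; abel
  | monomial n c ih =>
    rw [pow_succ, ← mul_assoc]
    generalize C c * X ^ n = f at ih ⊢
    rw [map_mul, aeval_X, ← mul_assoc, ih, add_mul, mul_assoc, p_mul_q, derivative_mul,
      derivative_X, mul_one, map_add, map_mul, aeval_X]
    simp only [mul_add, Algebra.algebraMap_eq_smul_one, mul_smul_comm, mul_one, smul_mul_assoc,
      smul_add, ← mul_assoc]
    abel

noncomputable def fockRep : Weyl K ℏ →ₐ[K] Module.End K K[X] :=
  RingQuot.liftAlgHom K ⟨FreeAlgebra.lift K ![LinearMap.mulLeft K X, ℏ • derivative], by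
    rintro _ _ ⟨⟩
    refine LinearMap.ext fun f => ?_
    simp only [map_mul, map_add, FreeAlgebra.lift_ι_apply, AlgHom.commutes, Module.End.mul_apply,
      Matrix.cons_val_zero, Matrix.cons_val_one, LinearMap.add_apply, LinearMap.smul_apply,
      LinearMap.mulLeft_apply, Module.algebraMap_end_apply, derivative_mul, derivative_X,
      one_mul, smul_add, mul_smul_comm]
    abel⟩

theorem fockRep_q : fockRep K ℏ (q K ℏ) = LinearMap.mulLeft K X := by
  rw [q, fockRep, RingQuot.liftAlgHom_mkAlgHom_apply, FreeAlgebra.lift_ι_apply]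
  rfl

theorem fockRep_p : fockRep K ℏ (p K ℏ) = ℏ • derivative := by
  rw [p, fockRep, RingQuot.liftAlgHom_mkAlgHom_apply, FreeAlgebra.lift_ι_apply]
  rfl

theorem fockRep_aeval_q (f : K[X]) : fockRep K ℏ (aeval (q K ℏ) f) = LinearMap.mulLeft K f := by
  have h : (fockRep K ℏ).comp (aeval (q K ℏ)) = Algebra.lmul K K[X] :=
    Polynomial.algHom_ext (by rw [AlgHom.comp_apply, aeval_X, fockRep_q]; rfl)
  exact DFunLike.congr_fun h f

theorem fockRep_aeval_q_apply_one (f : K[X]) : fockRep K ℏ (aeval (q K ℏ) f) 1 = f := by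
  simp [fockRep_aeval_q]

theorem fockRep_apply_one_of_mem_span_p {w : Weyl K ℏ}
    (hw : w ∈ Submodule.span (Weyl K ℏ) {p K ℏ}) : fockRep K ℏ w 1 = 0 := by
  obtain ⟨a, rfl⟩ := Submodule.mem_span_singleton.mp hw
  simp [fockRep_p]

noncomputable def fockMap : K[X] →ₗ[K] Weyl K ℏ ⧸ Submodule.span (Weyl K ℏ) {p K ℏ} :=
  ((Submodule.span (Weyl K ℏ) {p K ℏ}).mkQ.restrictScalars K).comp (aeval (q K ℏ)).toLinearMap

theorem fockMap_apply (f : K[X]) : fockMap K ℏ f = Submodule.Quotient.mk (aeval (q K ℏ) f) :=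
  rfl

theorem fockMap_injective : Function.Injective (fockMap K ℏ) := by
  intro f g hfg
  rw [fockMap_apply, fockMap_apply, Submodule.Quotient.eq] at hfg
  simpa [fockRep_aeval_q_apply_one, sub_eq_zero] using fockRep_apply_one_of_mem_span_p K ℏ hfg

theorem q_smul_fockMap (f : K[X]) : q K ℏ • fockMap K ℏ f = fockMap K ℏ (X * f) := by
  simp [fockMap_apply, ← Submodule.Quotient.mk_smul]

theorem p_smul_fockMap (f : K[X]) : p K ℏ • fockMap K ℏ f = fockMap K ℏ (ℏ • derivative f) := by
  have hvac : (Submodule.Quotient.mk (aeval (q K ℏ) f * p K ℏ) :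
      Weyl K ℏ ⧸ Submodule.span (Weyl K ℏ) {p K ℏ}) = 0 :=
    (Submodule.Quotient.mk_eq_zero _).mpr
      (Submodule.smul_mem _ _ (Submodule.mem_span_singleton_self _))
  rw [fockMap_apply, ← Submodule.Quotient.mk_smul, smul_eq_mul, p_mul_aeval_q,
    Submodule.Quotient.mk_add, hvac, zero_add, fockMap_apply, map_smul,
    Submodule.Quotient.mk_smul]

theorem fockMap_surjective : Function.Surjective (fockMap K ℏ) := by
  have hstable := Submodule.smul_mem_of_adjoin_eq_top (adjoin_q_p K ℏ)
    (LinearMap.range (fockMap K ℏ)) <| by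
      rintro a (rfl | rfl) _ ⟨f, rfl⟩
      exacts [⟨_, (q_smul_fockMap K ℏ f).symm⟩, ⟨_, (p_smul_fockMap K ℏ f).symm⟩]
  intro z
  obtain ⟨w, rfl⟩ := Submodule.Quotient.mk_surjective _ z
  have hw : Submodule.Quotient.mk w = w • fockMap K ℏ 1 := by
    rw [fockMap_apply, map_one, ← Submodule.Quotient.mk_smul, smul_eq_mul, mul_one]
  exact hw ▸ hstable w ⟨1, rfl⟩

end Weyl

theorem weyl_fock_module_iso_general
    (K : Type*) [Field K] (ℏ : K) :
    ∃ φ : Polynomial K →ₗ[K]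
        Weyl K ℏ ⧸ Submodule.span (Weyl K ℏ) {Weyl.p K ℏ},
      (∀ n : ℕ, φ (Polynomial.X ^ n) =
        Submodule.Quotient.mk ((Weyl.q K ℏ) ^ n)) ∧
      Function.Bijective φ :=
  ⟨Weyl.fockMap K ℏ, fun n => by simp [Weyl.fockMap_apply],
    Weyl.fockMap_injective K ℏ, Weyl.fockMap_surjective K ℏ⟩

/-- The `K`-linear map `K[X] → W/(W·p)` sending `Xⁿ` to the class of `qⁿ` is a
bijection: the Fock module is identified with `K[q]`. -/
theorem weyl_fock_module_iso
    (K : Type*) [Field K] [CharZero K] (ℏ : K) :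
    ∃ φ : Polynomial K →ₗ[K]
        Weyl K ℏ ⧸ Submodule.span (Weyl K ℏ) {Weyl.p K ℏ},
      (∀ n : ℕ, φ (Polynomial.X ^ n) =
        Submodule.Quotient.mk ((Weyl.q K ℏ) ^ n)) ∧
      Function.Bijective φ :=
  weyl_fock_module_iso_general K ℏ
end
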